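/- Let T be a nondegenerate tetrahedron in ℝ³ and let v be a vector field of the form v(x) = a + b × x with constant vectors a,b ∈ ℝ³ (lowest-order Nédélec space ND₀). If the tangential component of v vanishes identically on three of the four faces of T, then v = 0. -/
import Mathlib

open Matrix

/-- The face of the tetrahedron `w` opposite vertex `l`. -/
noncomputable def tetFace (w : Fin 4 → Fin 3 → ℝ) (l : Fin 4) : Set (Fin 3 → ℝ) :=
  convexHull ℝ (w '' {i | i ≠ l})

lemma mem_tetFace (w : Fin 4 → Fin 3 → ℝ) {i l : Fin 4} (hi : i ≠ l) :
    w i ∈ tetFace w l :=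
  subset_convexHull ℝ _ ⟨i, hi, rfl⟩

lemma exists_not_mem3 (i j m : Fin 4) : ∃ l : Fin 4, l ≠ i ∧ l ≠ j ∧ l ≠ m := by
  by_contra hc
  push_neg at hc
  have hsub : (Finset.univ : Finset (Fin 4)) ⊆ {i, j, m} := by
    intro x _
    by_cases hxi : x = i
    · simp [hxi]
    by_cases hxj : x = j
    · simp [hxj]
    simp [hc x hxi hxj]
  have := Finset.card_le_card hsub
  have h3 : ({i, j, m} : Finset (Fin 4)).card ≤ 3 := by
    apply le_trans (Finset.card_insert_le _ _)
    have := Finset.card_insert_le j ({m} : Finset (Fin 4))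
    simp at this ⊢; omega
  simp [Finset.card_univ] at this
  omega

theorem stmt10 (w : Fin 4 → Fin 3 → ℝ) (hw : AffineIndependent ℝ w)
    (a b : Fin 3 → ℝ) (m : Fin 4)
    -- the tangential component of `x ↦ a + b × x` vanishes on the three faces ≠ m
    (h : ∀ l, l ≠ m → ∀ x ∈ tetFace w l, ∀ y ∈ tetFace w l, ∀ z ∈ tetFace w l,
      (a + crossProduct b x) ⬝ᵥ (y - z) = 0) :
    a = 0 ∧ b = 0 := by
  -- key pointwise conditions at vertices
  have key : ∀ i j : Fin 4, (a + crossProduct b (w i)) ⬝ᵥ (w j - w m) = 0 := by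
    intro i j
    obtain ⟨l, hli, hlj, hlm⟩ := exists_not_mem3 i j m
    exact h l hlm _ (mem_tetFace w (Ne.symm hli)) _ (mem_tetFace w (Ne.symm hlj)) _
      (mem_tetFace w (Ne.symm hlm))
  -- the vectors w j - w m for j ≠ m span ℝ³
  have hli : LinearIndependent ℝ (fun j : {x : Fin 4 // x ≠ m} => w j - w m) := by
    have := (affineIndependent_iff_linearIndependent_vsub ℝ w m).mp hw
    simpa [vsub_eq_sub] using this
  have hcard : Fintype.card {x : Fin 4 // x ≠ m} = Module.finrank ℝ (Fin 3 → ℝ) := by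
    simp [Fintype.card_subtype_compl]
  haveI : Nonempty {x : Fin 4 // x ≠ m} := by
    obtain ⟨y, hy⟩ := exists_ne m
    exact ⟨⟨y, hy⟩⟩
  have hspan : Submodule.span ℝ (Set.range fun j : {x : Fin 4 // x ≠ m} => w j - w m) = ⊤ :=
    hli.span_eq_top_of_card_eq_finrank hcard
  -- a linear functional vanishing on the spanning set vanishes everywhere
  have vanish : ∀ (f : (Fin 3 → ℝ) →ₗ[ℝ] ℝ),
      (∀ j : Fin 4, f (w j - w m) = 0) → ∀ x, f x = 0 := by
    intro f hf x
    have : Submodule.span ℝ (Set.range fun j : {x : Fin 4 // x ≠ m} => w j - w m)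
        ≤ LinearMap.ker f := by
      rw [Submodule.span_le]
      rintro y ⟨j, rfl⟩
      exact hf j
    rw [hspan] at this
    exact this Submodule.mem_top
  -- dot product functional
  have dotf : ∀ u : Fin 3 → ℝ, ∃ f : (Fin 3 → ℝ) →ₗ[ℝ] ℝ, ∀ x, f x = u ⬝ᵥ x := by
    intro u
    refine ⟨⟨⟨fun x => u ⬝ᵥ x, fun x y => dotProduct_add u x y⟩,
      fun c x => by simp [dotProduct_smul, smul_eq_mul]⟩, fun x => rfl⟩
  -- each vertex value vanishes
  have hu : ∀ i : Fin 4, a + crossProduct b (w i) = 0 := by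
    intro i
    obtain ⟨f, hf⟩ := dotf (a + crossProduct b (w i))
    have := vanish f (fun j => by rw [hf]; exact key i j)
    have h0 : (a + crossProduct b (w i)) ⬝ᵥ (a + crossProduct b (w i)) = 0 := by
      rw [← hf]; exact this _
    exact dotProduct_self_eq_zero.mp h0
  -- b × y = 0 for all y
  have hcross : ∀ j : Fin 4, crossProduct b (w j - w m) = 0 := by
    intro j
    have := sub_eq_zero.mpr ((hu j).trans (hu m).symm)
    simpa [map_sub, add_sub_add_left_eq_sub] using this
  have hb2 : ∀ c y : Fin 3 → ℝ, (crossProduct b y) ⬝ᵥ c = 0 := by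
    intro c
    exact vanish
      { toFun := fun y => (crossProduct b y) ⬝ᵥ c,
        map_add' := fun y z => by
          show (crossProduct b (y + z)) ⬝ᵥ c = _
          rw [map_add, add_dotProduct],
        map_smul' := fun r y => by
          show (crossProduct b (r • y)) ⬝ᵥ c = _
          rw [LinearMap.map_smul, smul_dotProduct]; simp }
      (fun j => by simp [hcross j])
  have hb : ∀ y, crossProduct b y = 0 := fun y =>
    dotProduct_self_eq_zero.mp (hb2 (crossProduct b y) y)
  have hbz : b = 0 := by
    have h1 := congr_fun (hb ![1, 0, 0]) 1
    have h2 := congr_fun (hb ![1, 0, 0]) 2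
    have h0 := congr_fun (hb ![0, 1, 0]) 2
    simp [cross_apply] at h0 h1 h2
    funext i
    fin_cases i <;> simp [h0, h1, h2]
  have haz : a = 0 := by
    have := hu m
    rw [hbz] at this
    simpa using this
  exact ⟨haz, hbz⟩
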